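/- The classical Gordan transvectants coincide with the iterated Poisson brackets under the symplectic lifting: for every nonnegative integer k, all real λ, μ, and all smooth functions f, g : ℝ → ℝ, one has, on the half-plane {p > 0}, B_k(F_f, F_g) = k! · F_{J_k^{λ,μ}(f,g)}, where on the right-hand side the lifting is taken with weight λ+μ+k. -/

import Mathlib

/-- Partial derivative in `p`. -/
noncomputable def dp (F : ℝ → ℝ → ℝ) : ℝ → ℝ → ℝ := fun p q => deriv (fun p' => F p' q) p

/-- Partial derivative in `q`. -/
noncomputable def dq (F : ℝ → ℝ → ℝ) : ℝ → ℝ → ℝ := fun p q => deriv (fun q' => F p q') q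

/-- Iterated partial derivative `∂^{i+j}/∂p^i ∂q^j`. -/
noncomputable def pdiv (i j : ℕ) (F : ℝ → ℝ → ℝ) : ℝ → ℝ → ℝ := dp^[i] (dq^[j] F)

/-- The iterated Poisson bracket on `ℝ²`:
`B_k(F,G) = Σ_{i+j=k} (−1)^i binom(k,i) (∂^k F/∂p^i∂q^j)(∂^k G/∂p^j∂q^i)`. -/
noncomputable def Bk (k : ℕ) (F G : ℝ → ℝ → ℝ) : ℝ → ℝ → ℝ :=
  fun p q => ∑ i ∈ Finset.range (k + 1),
    (-1 : ℝ) ^ i * (Nat.choose k i : ℝ) * pdiv i (k - i) F p q * pdiv (k - i) i G p q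

/-- Generalized binomial coefficient `binom(a,n) = a(a−1)⋯(a−n+1)/n!`. -/
noncomputable def gbinom (a : ℝ) (n : ℕ) : ℝ :=
  (∏ i ∈ Finset.range n, (a - (i : ℝ))) / (Nat.factorial n : ℝ)

/-- The classical Gordan transvectant
`J_k^{λ,μ}(f,g) = Σ_{i+j=k} (−1)^i binom(2λ+k−1,j) binom(2μ+k−1,i) f^{(i)} g^{(j)}`. -/
noncomputable def Jc (k : ℕ) (l m : ℝ) (f g : ℝ → ℝ) : ℝ → ℝ :=
  fun x => ∑ i ∈ Finset.range (k + 1),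
    (-1 : ℝ) ^ i * gbinom (2 * l + (k : ℝ) - 1) (k - i) * gbinom (2 * m + (k : ℝ) - 1) i
      * deriv^[i] f x * deriv^[k - i] g x

/-- The symplectic lifting of a density of weight `ν`: `F_f(p,q) = p^{−2ν} f(q/p)`. -/
noncomputable def liftC (v : ℝ) (f : ℝ → ℝ) : ℝ → ℝ → ℝ :=
  fun p q => p ^ (-(2 * v)) * f (q / p)

noncomputable def cc (b : ℝ) : ℕ → ℕ → ℝ
  | 0, 0 => 1
  | 0, _+1 => 0
  | i+1, 0 => -(b + i) * cc b i 0
  | i+1, s+1 => -(b + (i:ℝ) + (s+1)) * cc b i (s+1) - cc b i s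

lemma cc_zero (b : ℝ) : ∀ i s : ℕ, i < s → cc b i s = 0 := by
  intro i
  induction i with
  | zero => intro s hs; match s, hs with | s+1, _ => rfl
  | succ i ih =>
    intro s hs
    match s, hs with
    | s+1, hs =>
      show -(b + (i:ℝ) + (s+1)) * cc b i (s+1) - cc b i s = 0
      rw [ih (s+1) (by omega), ih s (by omega)]
      ring

lemma cc_rec (b : ℝ) (i s : ℕ) :
    cc b (i+1) s = -(b + i + s) * cc b i s - (if s = 0 then 0 else cc b i (s-1)) := by
  match s with
  | 0 => show -(b + i) * cc b i 0 = _; simp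
  | s+1 =>
    show -(b + (i:ℝ) + (s+1)) * cc b i (s+1) - cc b i s = _
    simp only [Nat.succ_ne_zero, if_false, Nat.add_sub_cancel]
    push_cast
    ring

lemma cc_closed (b : ℝ) : ∀ i s : ℕ, s ≤ i →
    cc b i s = (-1:ℝ)^i * (Nat.choose i s : ℝ) * ∏ r ∈ Finset.range (i-s), (b + s + r) := by
  intro i
  induction i with
  | zero => intro s hs; interval_cases s; simp [cc]
  | succ i ih =>
    intro s hs
    rw [cc_rec]
    rcases Nat.eq_or_lt_of_le hs with heq | hlt
    · -- s = i+1
      rw [← heq, cc_zero b i s (by omega)]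
      match s, heq with
      | s+1, heq =>
        have hsi : s = i := by omega
        subst hsi
        simp only [Nat.succ_ne_zero, if_false, Nat.add_sub_cancel]
        rw [ih s le_rfl]
        simp [Nat.choose_self]
        push_cast
        ring
    · -- s ≤ i
      have hsi : s ≤ i := by omega
      rw [ih s hsi]
      match s with
      | 0 =>
        simp only [if_pos rfl]
        rw [show i + 1 - 0 = (i - 0) + 1 by omega, Finset.prod_range_succ]
        simp only [Nat.choose_zero_right, Nat.cast_one, Nat.sub_zero, Nat.cast_zero]
        push_cast
        ring
      | s+1 =>
        simp only [Nat.succ_ne_zero, if_false, Nat.add_sub_cancel]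
        rw [ih s (by omega)]
        have e1 : i + 1 - (s+1) = i - s := by omega
        have e2 : i - s = (i - (s+1)) + 1 := by omega
        have c1 : ((i - (s + 1) : ℕ) : ℝ) = (i:ℝ) - s - 1 := by
          rw [Nat.cast_sub (by omega)]; push_cast; ring
        have hch : ((Nat.choose i (s+1) : ℕ) : ℝ) * ((s:ℝ)+1) = (Nat.choose i s : ℝ) * ((i:ℝ) - s) := by
          have h' := congrArg (Nat.cast (R := ℝ)) (Nat.choose_succ_right_eq i s)
          push_cast [Nat.cast_sub (show s ≤ i by omega)] at h'
          linarith [h']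
        have hcs : ((Nat.choose (i+1) (s+1) : ℕ) : ℝ) = (Nat.choose i s : ℝ) + (Nat.choose i (s+1) : ℝ) := by
          rw [Nat.choose_succ_succ]; push_cast; ring
        have hA : ∏ r ∈ Finset.range (i-s), (b + (s:ℝ) + (r:ℝ))
            = (b + s) * ∏ r ∈ Finset.range (i-(s+1)), (b + ((s:ℝ)+1) + (r:ℝ)) := by
          rw [e2, Finset.prod_range_succ']
          have : ∀ r ∈ Finset.range (i-(s+1)), (b + (s:ℝ) + ((r+1:ℕ):ℝ)) = (b + ((s:ℝ)+1) + (r:ℝ)) := by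
            intro r _; push_cast; ring
          rw [Finset.prod_congr rfl this]
          push_cast; ring
        have hB : ∏ r ∈ Finset.range (i-s), (b + ((s:ℝ)+1) + (r:ℝ))
            = (∏ r ∈ Finset.range (i-(s+1)), (b + ((s:ℝ)+1) + (r:ℝ))) * (b + (i:ℝ)) := by
          rw [e2, Finset.prod_range_succ, c1]
          ring
        rw [e1, hcs]
        push_cast
        rw [hA, hB]
        set P := ∏ r ∈ Finset.range (i - (s+1)), (b + ((s:ℝ)+1) + (r:ℝ)) with hPdef
        linear_combination (-(-1:ℝ)^i * P) * hch

lemma trinom (N j β : ℕ) (hj : j ≤ N) :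
    N.choose j * (N - j).choose β = N.choose β * (N - β).choose j := by
  rcases le_or_gt β (N - j) with hb | hb
  · have hjb : j + β ≤ N := by omega
    have h1 := Nat.choose_mul (n := N) (k := j + β) (s := j) (Nat.le_add_right _ _)
    have h2 := Nat.choose_mul (n := N) (k := j + β) (s := β) (Nat.le_add_left _ _)
    have e1 : j + β - j = β := by omega
    have e2 : j + β - β = j := by omega
    rw [e1] at h1; rw [e2] at h2
    have h3 : (j + β).choose j = (j + β).choose β := by
      rw [← Nat.choose_symm (Nat.le_add_left β j)]
      congr 1; omega
    rw [← h1, h3, h2]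
  · rcases le_or_gt β N with hbN | hbN
    · rw [Nat.choose_eq_zero_of_lt hb, Nat.choose_eq_zero_of_lt (show N - β < j by omega)]
      simp
    · rw [Nat.choose_eq_zero_of_lt hbN, Nat.choose_eq_zero_of_lt (show N - j < β by omega)]
      simp

lemma alt_sum (n : ℕ) :
    ∑ j ∈ Finset.range (n+1), (-1:ℝ)^j * (n.choose j : ℝ) = if n = 0 then 1 else 0 := by
  by_cases hn : n = 0
  · subst hn; simp
  · rw [if_neg hn]
    have h := Int.alternating_sum_range_choose_of_ne hn
    exact_mod_cast h

lemma idI (k α β : ℕ) (hα : α ≤ k) (hβ : β ≤ k) :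
    ∑ i ∈ Finset.range (k+1), (-1:ℝ)^i * (k.choose i : ℝ) * (i.choose α : ℝ) * ((k-i).choose β : ℝ)
    = if α + β = k then (-1:ℝ)^α * (k.choose α : ℝ) else 0 := by
  set N := k - α with hN
  have hsub : ∑ i ∈ Finset.Ico α (k+1), (-1:ℝ)^i * (k.choose i : ℝ) * (i.choose α : ℝ) * ((k-i).choose β : ℝ)
      = ∑ i ∈ Finset.range (k+1), (-1:ℝ)^i * (k.choose i : ℝ) * (i.choose α : ℝ) * ((k-i).choose β : ℝ) := by
    apply Finset.sum_subset
    · intro i hi; simp only [Finset.mem_Ico] at hi; simp only [Finset.mem_range]; omega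
    · intro i hi hni
      simp only [Finset.mem_range] at hi
      simp only [Finset.mem_Ico] at hni
      have : i < α := by omega
      rw [Nat.choose_eq_zero_of_lt this]
      simp
  rw [← hsub, Finset.sum_Ico_eq_sum_range]
  have hkα : k + 1 - α = N + 1 := by omega
  rw [hkα]
  have hterm : ∀ j ∈ Finset.range (N+1),
      (-1:ℝ)^(α+j) * (k.choose (α+j) : ℝ) * ((α+j).choose α : ℝ) * ((k-(α+j)).choose β : ℝ)
      = ((-1:ℝ)^α * (k.choose α : ℝ) * (N.choose β : ℝ)) * ((-1:ℝ)^j * ((N-β).choose j : ℝ)) := by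
    intro j hj
    simp only [Finset.mem_range] at hj
    have hj' : j ≤ N := by omega
    have h1 : k.choose (α+j) * ((α+j).choose α) = k.choose α * (N.choose j) := by
      have h := Nat.choose_mul (n := k) (k := α+j) (s := α) (Nat.le_add_right _ _)
      rw [show α + j - α = j by omega] at h
      exact h
    have h2 := trinom N j β hj'
    have h3 : k - (α + j) = N - j := by omega
    rw [h3, pow_add]
    have hc1 : ((k.choose (α+j) : ℕ):ℝ) * (((α+j).choose α : ℕ):ℝ) = (k.choose α : ℝ) * (N.choose j : ℝ) := by
      exact_mod_cast congrArg (Nat.cast (R := ℝ)) h1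
    have hc2 : ((N.choose j : ℕ):ℝ) * (((N-j).choose β : ℕ):ℝ) = (N.choose β : ℝ) * ((N-β).choose j : ℝ) := by
      exact_mod_cast congrArg (Nat.cast (R := ℝ)) h2
    calc (-1:ℝ)^α * (-1:ℝ)^j * (k.choose (α+j) : ℝ) * ((α+j).choose α : ℝ) * ((N-j).choose β : ℝ)
        = (-1:ℝ)^α * (-1:ℝ)^j * ((k.choose (α+j) : ℝ) * ((α+j).choose α : ℝ)) * ((N-j).choose β : ℝ) := by ring
      _ = (-1:ℝ)^α * (-1:ℝ)^j * ((k.choose α : ℝ) * (N.choose j : ℝ)) * ((N-j).choose β : ℝ) := by rw [hc1]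
      _ = (-1:ℝ)^α * (-1:ℝ)^j * (k.choose α : ℝ) * ((N.choose j : ℝ) * ((N-j).choose β : ℝ)) := by ring
      _ = (-1:ℝ)^α * (-1:ℝ)^j * (k.choose α : ℝ) * ((N.choose β : ℝ) * ((N-β).choose j : ℝ)) := by rw [hc2]
      _ = ((-1:ℝ)^α * (k.choose α : ℝ) * (N.choose β : ℝ)) * ((-1:ℝ)^j * ((N-β).choose j : ℝ)) := by ring
  rw [Finset.sum_congr rfl hterm, ← Finset.mul_sum]
  rcases lt_or_ge N β with hcase | hcase
  · have hz : (N.choose β : ℝ) = 0 := by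
      rw [Nat.choose_eq_zero_of_lt hcase]; simp
    rw [if_neg (by omega), hz]
    ring
  · have hsum : ∑ j ∈ Finset.range (N+1), (-1:ℝ)^j * ((N-β).choose j : ℝ)
        = if N - β = 0 then 1 else 0 := by
      rw [← alt_sum (N-β)]
      apply (Finset.sum_subset _ _).symm
      · intro j hj; simp only [Finset.mem_range] at *; omega
      · intro j hj hnj
        simp only [Finset.mem_range] at hj hnj
        rw [Nat.choose_eq_zero_of_lt (show N - β < j by omega)]
        simp
    rw [hsum]
    by_cases hNβ : β = N
    · rw [if_pos (by omega), if_pos (by omega), hNβ, Nat.choose_self]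
      push_cast; ring
    · rw [if_neg (by omega), if_neg (by omega)]
      ring

lemma smooth_hasDerivAt {h : ℝ → ℝ} (hh : ContDiff ℝ ((⊤:ℕ∞):WithTop ℕ∞) h) (x : ℝ) :
    HasDerivAt h (deriv h x) x :=
  ((hh.differentiable (by simp)) x).hasDerivAt

lemma smooth_iter {h : ℝ → ℝ} (hh : ContDiff ℝ ((⊤:ℕ∞):WithTop ℕ∞) h) (n : ℕ) :
    ContDiff ℝ ((⊤:ℕ∞):WithTop ℕ∞) (deriv^[n] h) :=
  ContDiff.iterate_deriv n hh

lemma dp_congr (F G : ℝ → ℝ → ℝ) (h : ∀ p, 0 < p → ∀ q, F p q = G p q) (i : ℕ) :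
    ∀ p, 0 < p → ∀ q, dp^[i] F p q = dp^[i] G p q := by
  induction i with
  | zero => exact h
  | succ i ih =>
    intro p hp q
    rw [Function.iterate_succ_apply', Function.iterate_succ_apply']
    show deriv (fun p' => dp^[i] F p' q) p = deriv (fun p' => dp^[i] G p' q) p
    apply Filter.EventuallyEq.deriv_eq
    filter_upwards [isOpen_Ioi.mem_nhds hp] with p' hp'
    exact ih p' hp' q

lemma dq_iter (b : ℝ) (h : ℝ → ℝ) (hh : ContDiff ℝ ((⊤:ℕ∞):WithTop ℕ∞) h) (j : ℕ) :
    ∀ p, 0 < p → ∀ q, dq^[j] (fun p q => p ^ (-b) * h (q / p)) p q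
      = p ^ (-(b + (j:ℝ))) * deriv^[j] h (q / p) := by
  induction j with
  | zero => intro p hp q; simp
  | succ j ih =>
    intro p hp q
    rw [Function.iterate_succ_apply']
    show deriv (fun q' => dq^[j] _ p q') q = _
    have hfun : (fun q' => dq^[j] (fun p q => p ^ (-b) * h (q / p)) p q')
        = fun q' => p ^ (-(b + (j:ℝ))) * deriv^[j] h (q' / p) := funext (ih p hp)
    rw [hfun]
    have hd : HasDerivAt (fun q' : ℝ => q' / p) (1 / p) q := by
      simpa using (hasDerivAt_id q).div_const p
    have hd2 : HasDerivAt (deriv^[j] h) (deriv^[j+1] h (q / p)) (q / p) := by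
      rw [Function.iterate_succ_apply']
      exact smooth_hasDerivAt (smooth_iter hh j) (q / p)
    have hcomp : HasDerivAt (fun q' : ℝ => deriv^[j] h (q' / p))
        (deriv^[j+1] h (q / p) * (1 / p)) q := hd2.comp q hd
    rw [(hcomp.const_mul (p ^ (-(b + (j:ℝ))))).deriv]
    rw [show (-(b + ((j+1:ℕ):ℝ))) = -(b + (j:ℝ)) + (-1) by push_cast; ring,
      Real.rpow_add hp, Real.rpow_neg_one]
    field_simp

lemma hasDerivAt_model (p : ℝ) (hp : 0 < p) (b : ℝ) (n : ℕ) :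
    HasDerivAt (fun p' : ℝ => p' ^ (-b) * (p'⁻¹) ^ n)
      ((-b - n) * (p ^ (-b) * (p⁻¹) ^ (n + 1))) p := by
  have h1 : HasDerivAt (fun p' : ℝ => p' ^ (-b - (n:ℝ))) ((-b - (n:ℝ)) * p ^ (-b - (n:ℝ) - 1)) p :=
    Real.hasDerivAt_rpow_const (Or.inl hp.ne')
  have heq : (fun p' : ℝ => p' ^ (-b) * (p'⁻¹) ^ n) =ᶠ[nhds p] (fun p' : ℝ => p' ^ (-b - (n:ℝ))) := by
    filter_upwards [isOpen_Ioi.mem_nhds hp] with p' hp'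
    rw [show (-b - (n:ℝ)) = -b + (-(n:ℝ)) by ring, Real.rpow_add hp']
    congr 1
    rw [Real.rpow_neg hp'.le, Real.rpow_natCast, inv_pow]
  have h2 := h1.congr_of_eventuallyEq heq
  refine h2.congr_deriv ?_
  rw [show (-b - (n:ℝ) - 1) = -b + (-(((n+1:ℕ)):ℝ)) by push_cast; ring, Real.rpow_add hp]
  congr 2
  rw [Real.rpow_neg hp.le, Real.rpow_natCast, inv_pow]

lemma dp_iter (b : ℝ) (h : ℝ → ℝ) (hh : ContDiff ℝ ((⊤:ℕ∞):WithTop ℕ∞) h) (i : ℕ) :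
    ∀ p, 0 < p → ∀ q, dp^[i] (fun p q => p ^ (-b) * h (q / p)) p q
      = ∑ s ∈ Finset.range (i+1),
          cc b i s * q ^ s * (p ^ (-b) * (p⁻¹) ^ (i + s) * deriv^[s] h (q / p)) := by
  induction i with
  | zero =>
    intro p hp q
    show p ^ (-b) * h (q / p) = _
    rw [Finset.sum_range_one]
    show _ = cc b 0 0 * q ^ 0 * _
    norm_num [cc]
  | succ i ih =>
    intro p hp q
    rw [Function.iterate_succ_apply']
    show deriv (fun p' => dp^[i] _ p' q) p = _
    have hev : (fun p' => dp^[i] (fun p q => p ^ (-b) * h (q / p)) p' q) =ᶠ[nhds p]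
        (fun p' => ∑ s ∈ Finset.range (i+1),
          cc b i s * q ^ s * (p' ^ (-b) * (p'⁻¹) ^ (i + s) * deriv^[s] h (q / p'))) := by
      filter_upwards [isOpen_Ioi.mem_nhds hp] with p' hp'
      exact ih p' hp' q
    rw [hev.deriv_eq]
    have hterm : ∀ s ∈ Finset.range (i+1), HasDerivAt
        (fun p' => cc b i s * q ^ s * (p' ^ (-b) * (p'⁻¹) ^ (i + s) * deriv^[s] h (q / p')))
        (cc b i s * q ^ s *
          ((-b - ((i+s:ℕ):ℝ)) * (p ^ (-b) * (p⁻¹) ^ ((i + s) + 1)) * deriv^[s] h (q / p)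
            + p ^ (-b) * (p⁻¹) ^ (i + s) * (deriv^[s+1] h (q / p) * (q * -(p⁻¹ ^ 2))))) p := by
      intro s _
      have hq : HasDerivAt (fun p' : ℝ => q / p') (q * -(p⁻¹ ^ 2)) p := by
        simp only [div_eq_mul_inv, inv_pow]
        exact (hasDerivAt_inv hp.ne').const_mul q
      have hds : HasDerivAt (deriv^[s] h) (deriv^[s+1] h (q / p)) (q / p) := by
        have := smooth_hasDerivAt (smooth_iter hh s) (q / p)
        rwa [Function.iterate_succ_apply' deriv s h]
      have hcomp : HasDerivAt (fun p' : ℝ => deriv^[s] h (q / p'))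
          (deriv^[s+1] h (q / p) * (q * -(p⁻¹ ^ 2))) p := hds.comp p hq
      exact ((hasDerivAt_model p hp b (i + s)).mul hcomp).const_mul (cc b i s * q ^ s)
    rw [(HasDerivAt.fun_sum hterm).deriv]
    have hsplit : ∀ s ∈ Finset.range (i+2),
        cc b (i+1) s * q ^ s * (p ^ (-b) * (p⁻¹) ^ ((i+1) + s) * deriv^[s] h (q / p))
        = (-(b + (i:ℝ) + (s:ℝ))) * cc b i s * q ^ s *
            (p ^ (-b) * (p⁻¹) ^ ((i+1) + s) * deriv^[s] h (q / p))
          + (if s = 0 then (0:ℝ) else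
              -(cc b i (s-1) * q ^ s * (p ^ (-b) * (p⁻¹) ^ ((i+1) + s) * deriv^[s] h (q / p)))) := by
      intro s _
      rw [cc_rec]
      cases s with
      | zero => norm_num
      | succ s' => simp only [Nat.succ_ne_zero, if_false, Nat.add_sub_cancel]; push_cast; ring
    rw [Finset.sum_congr rfl hsplit, Finset.sum_add_distrib]
    have e1 : ∑ s ∈ Finset.range (i+2), (-(b + (i:ℝ) + (s:ℝ))) * cc b i s * q ^ s *
          (p ^ (-b) * (p⁻¹) ^ ((i+1) + s) * deriv^[s] h (q / p))
        = ∑ s ∈ Finset.range (i+1), (-(b + (i:ℝ) + (s:ℝ))) * cc b i s * q ^ s *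
          (p ^ (-b) * (p⁻¹) ^ ((i+1) + s) * deriv^[s] h (q / p)) := by
      rw [Finset.sum_range_succ, cc_zero b i (i+1) (by omega)]
      ring
    have e2 : ∑ s ∈ Finset.range (i+2), (if s = 0 then (0:ℝ) else
          -(cc b i (s-1) * q ^ s * (p ^ (-b) * (p⁻¹) ^ ((i+1) + s) * deriv^[s] h (q / p))))
        = ∑ s ∈ Finset.range (i+1),
          -(cc b i s * q ^ (s+1) * (p ^ (-b) * (p⁻¹) ^ ((i+1) + (s+1)) * deriv^[s+1] h (q / p))) := by
      rw [Finset.sum_range_succ']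
      norm_num
    rw [e1, e2, ← Finset.sum_add_distrib]
    apply Finset.sum_congr rfl
    intro s _
    push_cast
    ring

lemma neg_one_pow_sub (k i : ℕ) (h : i ≤ k) : ((-1:ℝ))^(k-i) = (-1)^k * (-1)^i := by
  have h1 : ((-1:ℝ))^(k-i) * (-1)^i = (-1)^k := by
    rw [← pow_add]; congr 1; omega
  have h2 : ((-1:ℝ))^i * (-1)^i = 1 := by
    rw [← pow_add, show i + i = 2*i by ring, pow_mul]; norm_num
  calc ((-1:ℝ))^(k-i) = ((-1:ℝ))^(k-i) * ((-1)^i * (-1)^i) := by rw [h2]; ring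
    _ = ((-1:ℝ))^(k-i) * (-1)^i * (-1)^i := by ring
    _ = (-1)^k * (-1)^i := by rw [h1]

lemma axis (k : ℕ) (c : ℝ) (i : ℕ) (hik : i ≤ k) (x : ℝ) (W : ℕ → ℝ) :
    ∑ s ∈ Finset.range (i+1), cc (c + ((k-i : ℕ):ℝ)) i s * x ^ s * W (s + (k-i))
    = ∑ a ∈ Finset.range (k+1), (-1:ℝ)^i * (Nat.choose i (k-a) : ℝ) *
        (∏ r ∈ Finset.range (k-a), (c + (a:ℝ) + (r:ℝ))) * x ^ (a - (k-i)) * W a := by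
  have hsub : ∑ a ∈ Finset.Ico (k-i) (k+1), (-1:ℝ)^i * (Nat.choose i (k-a) : ℝ) *
        (∏ r ∈ Finset.range (k-a), (c + (a:ℝ) + (r:ℝ))) * x ^ (a - (k-i)) * W a
      = ∑ a ∈ Finset.range (k+1), (-1:ℝ)^i * (Nat.choose i (k-a) : ℝ) *
        (∏ r ∈ Finset.range (k-a), (c + (a:ℝ) + (r:ℝ))) * x ^ (a - (k-i)) * W a := by
    apply Finset.sum_subset
    · intro a ha; simp only [Finset.mem_Ico] at ha; simp only [Finset.mem_range]; omega
    · intro a ha hna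
      simp only [Finset.mem_range] at ha
      simp only [Finset.mem_Ico] at hna
      rw [Nat.choose_eq_zero_of_lt (show i < k - a by omega)]
      simp
  rw [← hsub, Finset.sum_Ico_eq_sum_range, show k + 1 - (k-i) = i + 1 by omega]
  apply Finset.sum_congr rfl
  intro s hs
  have hsi : s ≤ i := by simp only [Finset.mem_range] at hs; omega
  have e1 : k - (k - i + s) = i - s := by omega
  have e2 : k - i + s - (k - i) = s := by omega
  have e3 : s + (k - i) = k - i + s := by omega
  rw [e1, e2, ← e3, cc_closed _ i s hsi, Nat.choose_symm hsi]
  have hprod : ∏ r ∈ Finset.range (i-s), (c + ((k-i:ℕ):ℝ) + (s:ℝ) + (r:ℝ))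
      = ∏ r ∈ Finset.range (i-s), (c + ((s + (k-i) : ℕ):ℝ) + (r:ℝ)) := by
    apply Finset.prod_congr rfl
    intro r _
    push_cast
    ring
  rw [hprod]


lemma coeff_final (k a : ℕ) (ha : a ≤ k) (l m : ℝ) :
    (Nat.choose k a : ℝ) * (∏ r ∈ Finset.range (k-a), (2*l + (a:ℝ) + (r:ℝ)))
      * (∏ r ∈ Finset.range (k - (k-a)), (2*m + ((k-a:ℕ):ℝ) + (r:ℝ)))
    = (Nat.factorial k : ℝ) * gbinom (2*l + (k:ℝ) - 1) (k-a) * gbinom (2*m + (k:ℝ) - 1) a := by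
  have e0 : k - (k - a) = a := by omega
  rw [e0]
  have h1 : ∏ r ∈ Finset.range (k-a), (2*l + (k:ℝ) - 1 - (r:ℝ))
      = ∏ r ∈ Finset.range (k-a), (2*l + (a:ℝ) + (r:ℝ)) := by
    rw [← Finset.prod_range_reflect]
    apply Finset.prod_congr rfl
    intro r hr
    simp only [Finset.mem_range] at hr
    rw [Nat.cast_sub (by omega), Nat.cast_sub (by omega)]
    push_cast [Nat.cast_sub (show a ≤ k by omega)]
    ring
  have h2 : ∏ r ∈ Finset.range a, (2*m + (k:ℝ) - 1 - (r:ℝ))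
      = ∏ r ∈ Finset.range a, (2*m + ((k-a:ℕ):ℝ) + (r:ℝ)) := by
    rw [← Finset.prod_range_reflect]
    apply Finset.prod_congr rfl
    intro r hr
    simp only [Finset.mem_range] at hr
    rw [Nat.cast_sub (by omega), Nat.cast_sub (by omega)]
    push_cast [Nat.cast_sub (show a ≤ k by omega)]
    ring
  unfold gbinom
  rw [h1, h2, show ((k-a:ℕ):ℝ) = (k:ℝ)-(a:ℝ) from Nat.cast_sub ha]
  have hfac : (Nat.choose k a : ℝ) * (Nat.factorial a : ℝ) * (Nat.factorial (k-a) : ℝ)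
      = (Nat.factorial k : ℝ) := by
    exact_mod_cast congrArg (Nat.cast (R := ℝ)) (Nat.choose_mul_factorial_mul_factorial ha)
  have hfa : (Nat.factorial a : ℝ) ≠ 0 := by positivity
  have hfka : (Nat.factorial (k-a) : ℝ) ≠ 0 := by positivity
  field_simp
  linear_combination (∏ r ∈ Finset.range (k-a), (2*l + (a:ℝ) + (r:ℝ)))
    * (∏ r ∈ Finset.range a, (2*m + ((k:ℝ)-(a:ℝ)) + (r:ℝ))) * hfac


lemma rpow_split (p : ℝ) (hp : 0 < p) (c : ℝ) (n : ℕ) :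
    p ^ (-(c + (n:ℝ))) = p ^ (-c) * (p⁻¹)^n := by
  rw [show -(c + (n:ℝ)) = -c + (-(n:ℝ)) by ring, Real.rpow_add hp]
  congr 1
  rw [Real.rpow_neg hp.le, Real.rpow_natCast, inv_pow]

lemma pow_merge (u : ℝ) (a b c d : ℕ) (h : a + b = c + d) : u^a * u^b = u^c * u^d := by
  rw [← pow_add, ← pow_add, h]

lemma pdiv_lift (v : ℝ) (f : ℝ → ℝ) (hf : ContDiff ℝ ((⊤:ℕ∞):WithTop ℕ∞) f) (i j : ℕ)
    (p : ℝ) (hp : 0 < p) (q : ℝ) :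
    pdiv i j (liftC v f) p q
      = ∑ s ∈ Finset.range (i+1), cc (2*v + (j:ℝ)) i s * q ^ s *
          (p ^ (-(2*v + (j:ℝ))) * (p⁻¹) ^ (i + s) * deriv^[s + j] f (q / p)) := by
  have h0 : ∀ p, 0 < p → ∀ q, dq^[j] (liftC v f) p q
      = p ^ (-(2*v + (j:ℝ))) * deriv^[j] f (q / p) := by
    intro p hp q
    exact dq_iter (2*v) f hf j p hp q
  have trans := dp_congr (dq^[j] (liftC v f))
      (fun p q => p ^ (-(2*v + (j:ℝ))) * deriv^[j] f (q / p)) h0 i p hp q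
  show dp^[i] (dq^[j] (liftC v f)) p q = _
  rw [trans, dp_iter (2*v + (j:ℝ)) (deriv^[j] f) (smooth_iter hf j) i p hp q]
  apply Finset.sum_congr rfl
  intro s _
  rw [Function.iterate_add_apply]

lemma sum_mul_sum_const (c : ℝ) (s t : Finset ℕ) (f g : ℕ → ℝ) :
    c * (∑ i ∈ s, f i) * (∑ j ∈ t, g j) = ∑ i ∈ s, ∑ j ∈ t, c * (f i * g j) := by
  rw [mul_assoc, Finset.sum_mul_sum, Finset.mul_sum]
  exact Finset.sum_congr rfl fun i _ => Finset.mul_sum _ _ _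

lemma TU (k i a b : ℕ) (hik : i ≤ k) (ha : a ≤ k) (hb : b ≤ k) (x Pfa Pgb Fa Gb : ℝ) :
    ((-1:ℝ)^i * (Nat.choose k i : ℝ)) *
      (((-1:ℝ)^i * (Nat.choose i (k-a) : ℝ) * Pfa * x ^ (a-(k-i)) * Fa) *
        ((-1:ℝ)^(k-i) * (Nat.choose (k-i) (k-b) : ℝ) * Pgb * x ^ (b-i) * Gb))
    = ((-1:ℝ)^k * (Pfa * Pgb * x ^ (a+b-k) * Fa * Gb)) *
      ((-1:ℝ)^i * (Nat.choose k i : ℝ) * (Nat.choose i (k-a) : ℝ) * (Nat.choose (k-i) (k-b) : ℝ)) := by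
  rcases Nat.lt_or_ge i (k-a) with h|h
  · rw [Nat.choose_eq_zero_of_lt h]; push_cast; ring
  rcases Nat.lt_or_ge (k-i) (k-b) with h2|h2
  · rw [Nat.choose_eq_zero_of_lt h2]; push_cast; ring
  have hii : ((-1:ℝ))^i * (-1)^i = 1 := by
    rw [← pow_add, show i + i = 2*i by ring, pow_mul]; norm_num
  rw [show a+b-k = (a-(k-i)) + (b-i) by omega, pow_add]
  linear_combination ((Nat.choose k i : ℝ) * (Nat.choose i (k-a) : ℝ) * (Nat.choose (k-i) (k-b) : ℝ)
    * Pfa * Pgb * x^(a-(k-i)) * x^(b-i) * Fa * Gb * ((-1:ℝ)^i * (-1:ℝ)^i)) * (neg_one_pow_sub k i hik)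
    + ((Nat.choose k i : ℝ) * (Nat.choose i (k-a) : ℝ) * (Nat.choose (k-i) (k-b) : ℝ)
    * Pfa * Pgb * x^(a-(k-i)) * x^(b-i) * Fa * Gb * ((-1:ℝ)^k * (-1:ℝ)^i)) * hii

lemma comb (k : ℕ) (l m x : ℝ) (F G : ℕ → ℝ) :
    ∑ i ∈ Finset.range (k+1), (-1:ℝ)^i * (Nat.choose k i : ℝ) *
      (∑ s ∈ Finset.range (i+1), cc (2*l + ((k-i : ℕ):ℝ)) i s * x ^ s * F (s + (k-i))) *
      (∑ t ∈ Finset.range ((k-i)+1), cc (2*m + (i:ℝ)) (k-i) t * x ^ t * G (t + i))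
    = (Nat.factorial k : ℝ) * ∑ a ∈ Finset.range (k+1),
        (-1:ℝ)^a * gbinom (2*l + (k:ℝ) - 1) (k-a) * gbinom (2*m + (k:ℝ) - 1) a * F a * G (k-a) := by
  have step1 : ∀ i ∈ Finset.range (k+1), (-1:ℝ)^i * (Nat.choose k i : ℝ) *
      (∑ s ∈ Finset.range (i+1), cc (2*l + ((k-i : ℕ):ℝ)) i s * x ^ s * F (s + (k-i))) *
      (∑ t ∈ Finset.range ((k-i)+1), cc (2*m + (i:ℝ)) (k-i) t * x ^ t * G (t + i))
      = ∑ a ∈ Finset.range (k+1), ∑ b ∈ Finset.range (k+1),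
          ((-1:ℝ)^k * ((∏ r ∈ Finset.range (k-a), (2*l + (a:ℝ) + (r:ℝ))) *
            (∏ r ∈ Finset.range (k-b), (2*m + (b:ℝ) + (r:ℝ))) * x ^ (a+b-k) * F a * G b)) *
          ((-1:ℝ)^i * (Nat.choose k i : ℝ) * (Nat.choose i (k-a) : ℝ) * (Nat.choose (k-i) (k-b) : ℝ)) := by
    intro i hi
    have hik : i ≤ k := by simp only [Finset.mem_range] at hi; omega
    have ei : k - (k - i) = i := by omega
    have hg := axis k (2*m) (k-i) (Nat.sub_le k i) x G
    rw [ei] at hg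
    rw [axis k (2*l) i hik x F, hg, sum_mul_sum_const]
    apply Finset.sum_congr rfl
    intro a ha
    apply Finset.sum_congr rfl
    intro b hb
    simp only [Finset.mem_range] at ha hb
    exact TU k i a b hik (by omega) (by omega) x _ _ (F a) (G b)
  rw [Finset.sum_congr rfl step1, Finset.sum_comm]
  have step2 : ∀ a ∈ Finset.range (k+1),
      ∑ i ∈ Finset.range (k+1), ∑ b ∈ Finset.range (k+1),
          ((-1:ℝ)^k * ((∏ r ∈ Finset.range (k-a), (2*l + (a:ℝ) + (r:ℝ))) *
            (∏ r ∈ Finset.range (k-b), (2*m + (b:ℝ) + (r:ℝ))) * x ^ (a+b-k) * F a * G b)) *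
          ((-1:ℝ)^i * (Nat.choose k i : ℝ) * (Nat.choose i (k-a) : ℝ) * (Nat.choose (k-i) (k-b) : ℝ))
      = (Nat.factorial k : ℝ) *
          ((-1:ℝ)^a * gbinom (2*l + (k:ℝ) - 1) (k-a) * gbinom (2*m + (k:ℝ) - 1) a * F a * G (k-a)) := by
    intro a ha
    simp only [Finset.mem_range] at ha
    have ha' : a ≤ k := by omega
    rw [Finset.sum_comm]
    have hinner : ∀ b ∈ Finset.range (k+1),
        ∑ i ∈ Finset.range (k+1),
          ((-1:ℝ)^k * ((∏ r ∈ Finset.range (k-a), (2*l + (a:ℝ) + (r:ℝ))) *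
            (∏ r ∈ Finset.range (k-b), (2*m + (b:ℝ) + (r:ℝ))) * x ^ (a+b-k) * F a * G b)) *
          ((-1:ℝ)^i * (Nat.choose k i : ℝ) * (Nat.choose i (k-a) : ℝ) * (Nat.choose (k-i) (k-b) : ℝ))
        = if b = k - a then
            ((-1:ℝ)^k * ((∏ r ∈ Finset.range (k-a), (2*l + (a:ℝ) + (r:ℝ))) *
              (∏ r ∈ Finset.range (k-b), (2*m + (b:ℝ) + (r:ℝ))) * x ^ (a+b-k) * F a * G b)) *
            ((-1:ℝ)^(k-a) * (Nat.choose k (k-a) : ℝ))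
          else 0 := by
      intro b hb
      simp only [Finset.mem_range] at hb
      rw [← Finset.mul_sum, idI k (k-a) (k-b) (by omega) (by omega)]
      by_cases hcond : (k-a) + (k-b) = k
      · rw [if_pos hcond, if_pos (show b = k - a by omega)]
      · rw [if_neg hcond, if_neg (show ¬ b = k - a by omega), mul_zero]
    rw [Finset.sum_congr rfl hinner, Finset.sum_ite_eq' (Finset.range (k+1)) (k-a),
      if_pos (by simp only [Finset.mem_range]; omega)]
    have e5 : a + (k-a) - k = 0 := by omega
    have e6 : (Nat.choose k (k-a) : ℝ) = (Nat.choose k a : ℝ) := by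
      exact_mod_cast congrArg (Nat.cast (R := ℝ)) (Nat.choose_symm ha')
    rw [e5, pow_zero, e6, neg_one_pow_sub k a ha']
    have hk2 : ((-1:ℝ))^k * (-1)^k = 1 := by
      rw [← pow_add, show k + k = 2*k by ring, pow_mul]; norm_num
    have hcf := coeff_final k a ha' l m
    linear_combination ((-1:ℝ)^a * F a * G (k-a) * (Nat.choose k a : ℝ)
        * (∏ r ∈ Finset.range (k-a), (2*l + (a:ℝ) + (r:ℝ)))
        * (∏ r ∈ Finset.range (k-(k-a)), (2*m + ((k-a:ℕ):ℝ) + (r:ℝ)))) * hk2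
      + ((-1:ℝ)^a * F a * G (k-a)) * hcf
  rw [Finset.sum_congr rfl step2, ← Finset.mul_sum]

/-- the classical Gordan transvectants coincide with the iterated Poisson
brackets under the symplectic lifting: `B_k(F_f, F_g) = k! F_{J_k^{λ,μ}(f,g)}` on
`{p > 0}`, the lifting on the right being taken with weight `λ+μ+k`. -/
theorem transvectants_iterated_Poisson (k : ℕ) (l m : ℝ) (f g : ℝ → ℝ)
    (hf : ContDiff ℝ (⊤ : ℕ∞) f) (hg : ContDiff ℝ (⊤ : ℕ∞) g) :
    ∀ p : ℝ, 0 < p → ∀ q : ℝ,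
      Bk k (liftC l f) (liftC m g) p q
        = (Nat.factorial k : ℝ) * liftC (l + m + (k : ℝ)) (Jc k l m f g) p q := by
  intro p hp q
  have hf' : ContDiff ℝ ((⊤:ℕ∞):WithTop ℕ∞) f := hf.of_le (by simp)
  have hg' : ContDiff ℝ ((⊤:ℕ∞):WithTop ℕ∞) g := hg.of_le (by simp)
  show ∑ i ∈ Finset.range (k + 1),
      (-1 : ℝ) ^ i * (Nat.choose k i : ℝ) * pdiv i (k - i) (liftC l f) p q
        * pdiv (k - i) i (liftC m g) p q = _
  have hPf : ∀ i ∈ Finset.range (k+1),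
      (-1:ℝ)^i * (Nat.choose k i : ℝ) * pdiv i (k-i) (liftC l f) p q
        * pdiv (k-i) i (liftC m g) p q
      = ((p ^ (-(2*l)) * (p⁻¹)^k) * (p ^ (-(2*m)) * (p⁻¹)^k)) *
        ((-1:ℝ)^i * (Nat.choose k i : ℝ) *
          (∑ s ∈ Finset.range (i+1), cc (2*l + ((k-i:ℕ):ℝ)) i s * (q/p) ^ s
            * deriv^[s + (k-i)] f (q/p)) *
          (∑ t ∈ Finset.range ((k-i)+1), cc (2*m + (i:ℝ)) (k-i) t * (q/p) ^ t
            * deriv^[t + i] g (q/p))) := by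
    intro i hi
    have hik : i ≤ k := by simp only [Finset.mem_range] at hi; omega
    rw [pdiv_lift l f hf' i (k-i) p hp q, pdiv_lift m g hg' (k-i) i p hp q]
    have hf2 : ∑ s ∈ Finset.range (i+1), cc (2*l + ((k-i:ℕ):ℝ)) i s * q ^ s *
          (p ^ (-(2*l + ((k-i:ℕ):ℝ))) * (p⁻¹) ^ (i + s) * deriv^[s + (k-i)] f (q / p))
        = (p ^ (-(2*l)) * (p⁻¹)^k) * ∑ s ∈ Finset.range (i+1),
            cc (2*l + ((k-i:ℕ):ℝ)) i s * (q/p) ^ s * deriv^[s + (k-i)] f (q/p) := by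
      rw [Finset.mul_sum]
      apply Finset.sum_congr rfl
      intro s _
      rw [rpow_split p hp (2*l) (k-i), div_eq_mul_inv q p, mul_pow]
      have hm := pow_merge (p⁻¹) (k-i) (i+s) k s (by omega)
      linear_combination (cc (2*l + ((k-i:ℕ):ℝ)) i s * q^s * p ^ (-(2*l))
        * deriv^[s + (k-i)] f (q * p⁻¹)) * hm
    have hg2 : ∑ t ∈ Finset.range ((k-i)+1), cc (2*m + (i:ℝ)) (k-i) t * q ^ t *
          (p ^ (-(2*m + (i:ℝ))) * (p⁻¹) ^ ((k-i) + t) * deriv^[t + i] g (q / p))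
        = (p ^ (-(2*m)) * (p⁻¹)^k) * ∑ t ∈ Finset.range ((k-i)+1),
            cc (2*m + (i:ℝ)) (k-i) t * (q/p) ^ t * deriv^[t + i] g (q/p) := by
      rw [Finset.mul_sum]
      apply Finset.sum_congr rfl
      intro t _
      have hsp : p ^ (-(2*m + (i:ℝ))) = p ^ (-(2*m)) * (p⁻¹)^i := rpow_split p hp (2*m) i
      rw [hsp, div_eq_mul_inv q p, mul_pow]
      have hm := pow_merge (p⁻¹) i ((k-i)+t) k t (by omega)
      linear_combination (cc (2*m + (i:ℝ)) (k-i) t * q^t * p ^ (-(2*m))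
        * deriv^[t + i] g (q * p⁻¹)) * hm
    rw [hf2, hg2]
    ring
  rw [Finset.sum_congr rfl hPf, ← Finset.mul_sum]
  have hc := comb k l m (q/p) (fun a => deriv^[a] f (q/p)) (fun b => deriv^[b] g (q/p))
  rw [hc]
  show _ = (Nat.factorial k : ℝ) * (p ^ (-(2 * (l + m + (k:ℝ)))) * Jc k l m f g (q/p))
  have hPP : p ^ (-(2*(l+m+(k:ℝ))))
      = (p ^ (-(2*l)) * (p⁻¹)^k) * (p ^ (-(2*m)) * (p⁻¹)^k) := by
    have h2k : p ^ (-(((2*k:ℕ)):ℝ)) = (p⁻¹)^k * (p⁻¹)^k := by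
      rw [Real.rpow_neg hp.le, Real.rpow_natCast, show 2*k = k+k by ring, pow_add, mul_inv,
        inv_pow]
    rw [show -(2*(l+m+(k:ℝ))) = -(2*l) + (-(2*m) + (-(((2*k:ℕ)):ℝ))) by push_cast; ring,
      Real.rpow_add hp, Real.rpow_add hp, h2k]
    ring
  rw [hPP]
  show _ = _ * (_ * ∑ i ∈ Finset.range (k + 1),
    (-1 : ℝ) ^ i * gbinom (2 * l + (k : ℝ) - 1) (k - i) * gbinom (2 * m + (k : ℝ) - 1) i
      * deriv^[i] f (q/p) * deriv^[k - i] g (q/p))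
  ring
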